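/- Let P be a scale group acting on T_{q+1}. Then P^(e) acts transitively on the ends of T_{q+1} other than ω: for all ξ, ξ′ : ℤ → {0,…,q−1} with ξ_i = 0 = ξ′_i for all sufficiently small i, there exists an elliptic element g ∈ P with g(ξ|_m) = ξ′|_m for every m ∈ ℤ. -/

import Mathlib

namespace Scale

/-- A vertex of the `(q+1)`-regular tree `T_{q+1}`: a level `n ∈ ℤ` together with a
labelling `ℤ → Fin q` which vanishes above the level and for all sufficiently small indices. -/
@[ext] structure Vertex (q : ℕ) where
  level : ℤ
  lab : ℤ → Fin q
  zero_gt : ∀ i : ℤ, level < i → (lab i : ℕ) = 0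
  bdd : ∃ N : ℤ, ∀ i : ℤ, i < N → (lab i : ℕ) = 0

namespace Vertex

variable {q : ℕ} [NeZero q]

/-- The parent `v⁺` of a vertex. -/
def parent (v : Vertex q) : Vertex q where
  level := v.level - 1
  lab := fun i => if v.level - 1 < i then 0 else v.lab i
  zero_gt := by intro i hi; simp [hi]
  bdd := by
    obtain ⟨N, hN⟩ := v.bdd
    refine ⟨N, fun i hi => ?_⟩
    by_cases h : v.level - 1 < i
    · simp [h]
    · simp [h, hN i hi]

/-- The child `vj` of a vertex `v`. -/
def child (v : Vertex q) (j : Fin q) : Vertex q where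
  level := v.level + 1
  lab := fun i => if i = v.level + 1 then j else v.lab i
  zero_gt := by
    intro i hi
    have h1 : i ≠ v.level + 1 := by omega
    simp [h1, v.zero_gt i (by omega)]
  bdd := by
    obtain ⟨N, hN⟩ := v.bdd
    refine ⟨min N (v.level + 1), fun i hi => ?_⟩
    have h1 : i < N := lt_of_lt_of_le hi (min_le_left _ _)
    have h2 : i < v.level + 1 := lt_of_lt_of_le hi (min_le_right _ _)
    have h3 : i ≠ v.level + 1 := by omega
    simp [h3, hN i h1]

/-- The restriction `w|_m` of a vertex to level `m`. -/
def trunc (v : Vertex q) (m : ℤ) : Vertex q where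
  level := m
  lab := fun i => if m < i then 0 else v.lab i
  zero_gt := by intro i hi; simp [hi]
  bdd := by
    obtain ⟨N, hN⟩ := v.bdd
    refine ⟨N, fun i hi => ?_⟩
    by_cases h : m < i
    · simp [h]
    · simp [h, hN i hi]

/-- `w` is a descendant of `u` (in the rooted subtree `T_u`). -/
def Descendant (u w : Vertex q) : Prop := u.level ≤ w.level ∧ trunc w u.level = u

end Vertex

/-- The all-zero vertex `ṽ_n` at level `n`. -/
def zeroVtx (q : ℕ) [NeZero q] (n : ℤ) : Vertex q where
  level := n
  lab := fun _ => 0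
  zero_gt := by intro i _; simp
  bdd := ⟨0, by intro i _; simp⟩

/-- The map shifting all labels by `k` (a translation towards the end `ω` when `k > 0`). -/
def shiftMap {q : ℕ} (k : ℤ) (v : Vertex q) : Vertex q where
  level := v.level + k
  lab := fun i => v.lab (i - k)
  zero_gt := fun i hi => v.zero_gt (i - k) (by omega)
  bdd := by
    obtain ⟨N, hN⟩ := v.bdd
    exact ⟨N + k, fun i hi => hN (i - k) (by omega)⟩

/-- The translation `x̃₀ᵏ` of `T_{q+1}` as a permutation of the vertices. -/
def shiftPerm (q : ℕ) (k : ℤ) : Equiv.Perm (Vertex q) where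
  toFun := shiftMap k
  invFun := shiftMap (-k)
  left_inv := by
    intro v
    refine Vertex.ext ?_ ?_
    · show v.level + k + -k = v.level
      omega
    · funext i
      show v.lab (i - -k - k) = v.lab i
      congr 1
      omega
  right_inv := by
    intro v
    refine Vertex.ext ?_ ?_
    · show v.level + -k + k = v.level
      omega
    · funext i
      show v.lab (i - k - -k) = v.lab i
      congr 1
      omega

/-- The group `Isom(T_{q+1})_ω` of tree automorphisms fixing the distinguished end `ω`,
realised as the subgroup of permutations of the vertex set commuting with `parent`. -/
def IsomOmega (q : ℕ) [NeZero q] : Subgroup (Equiv.Perm (Vertex q)) where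
  carrier := {x | ∀ v : Vertex q, x (Vertex.parent v) = Vertex.parent (x v)}
  one_mem' := fun _ => rfl
  mul_mem' := by
    intro a b ha hb v
    show (a * b) (Vertex.parent v) = Vertex.parent ((a * b) v)
    rw [Equiv.Perm.mul_apply, Equiv.Perm.mul_apply, hb, ha]
  inv_mem' := by
    intro a ha v
    show a⁻¹ (Vertex.parent v) = Vertex.parent (a⁻¹ v)
    have h := ha (a⁻¹ v)
    rw [← Equiv.Perm.mul_apply, mul_inv_cancel, Equiv.Perm.one_apply] at h
    rw [← h, ← Equiv.Perm.mul_apply, inv_mul_cancel, Equiv.Perm.one_apply]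

/-- The level shift `n(x)` of an automorphism (evaluated at the zero vertex; for members
of `IsomOmega q` the shift is the same at every vertex). -/
def lshift {q : ℕ} [NeZero q] (x : Equiv.Perm (Vertex q)) : ℤ := (x (zeroVtx q 0)).level

/-- An automorphism is elliptic if it fixes a vertex. -/
def Elliptic {q : ℕ} (x : Equiv.Perm (Vertex q)) : Prop := ∃ v : Vertex q, x v = v

/-- Topology of pointwise convergence on `X → X` for `X` discrete. -/
def funTop (X : Type*) : TopologicalSpace (X → X) :=
  @Pi.topologicalSpace X (fun _ => X) (fun _ => ⊥)

/-- The permutation topology on `Equiv.Perm X`: pointwise stabilisers of finite sets of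
points form a neighbourhood basis of the identity. -/
def permTop (X : Type*) : TopologicalSpace (Equiv.Perm X) :=
  @TopologicalSpace.induced (Equiv.Perm X) ((X → X) × (X → X))
    (fun g => ((g : X → X), ((g⁻¹ : Equiv.Perm X) : X → X)))
    (@instTopologicalSpaceProd _ _ (funTop X) (funTop X))

instance (q : ℕ) : TopologicalSpace (Equiv.Perm (Vertex q)) := permTop _

instance (q : ℕ) : TopologicalSpace (Equiv.Perm (List (Fin q))) := permTop _

/-- A scale group: a closed subgroup of `Isom(T_{q+1})_ω` acting transitively on vertices. -/
def IsScaleGroup {q : ℕ} [NeZero q] (P : Subgroup (Equiv.Perm (Vertex q))) : Prop :=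
  P ≤ IsomOmega q ∧ IsClosed (P : Set (Equiv.Perm (Vertex q))) ∧
    ∀ v w : Vertex q, ∃ x ∈ P, x v = w

/-- The stabiliser of the vertex `v` in `P`, as a subgroup of the ambient permutation group. -/
def stabIn {q : ℕ} (P : Subgroup (Equiv.Perm (Vertex q))) (v : Vertex q) :
    Subgroup (Equiv.Perm (Vertex q)) where
  carrier := {g | g ∈ P ∧ g v = v}
  one_mem' := ⟨P.one_mem, rfl⟩
  mul_mem' := by
    intro a b ha hb
    exact ⟨P.mul_mem ha.1 hb.1, by rw [Equiv.Perm.mul_apply, hb.2, ha.2]⟩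
  inv_mem' := by
    intro a ha
    refine ⟨P.inv_mem ha.1, ?_⟩
    rw [Equiv.Perm.inv_eq_iff_eq]
    exact ha.2.symm

/-- The conjugate subgroup `xVx⁻¹`. -/
def conjSub {G : Type*} [Group G] (x : G) (V : Subgroup G) : Subgroup G :=
  V.map (MulAut.conj x).toMonoidHom

/-- The vertex `ξ|_m` on the ray towards the end represented by `ξ`. -/
def ray (q : ℕ) [NeZero q] (ξ : ℤ → Fin q) (N : ℤ) (hξ : ∀ i : ℤ, i < N → (ξ i : ℕ) = 0)
    (m : ℤ) : Vertex q where
  level := m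
  lab := fun i => if m < i then 0 else ξ i
  zero_gt := by intro i hi; simp [hi]
  bdd := by
    refine ⟨N, fun i hi => ?_⟩
    by_cases h : m < i
    · simp [h]
    · simp [h, hξ i hi]

/-- The contraction group of `x` in `P`. -/
def conSet {q : ℕ} (P : Subgroup (Equiv.Perm (Vertex q))) (x : Equiv.Perm (Vertex q)) :
    Set (Equiv.Perm (Vertex q)) :=
  {g | g ∈ P ∧ ∀ v : Vertex q, ∃ N : ℕ, ∀ n : ℕ, N ≤ n → (x ^ n * g * (x ^ n)⁻¹) v = v}


/-- `c` is a `P`-labelling of `T_{q+1}` with distinguished bi-infinite path `vp`: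
each `c v` is a bijection from the directed edges out of `v` (encoded as the
neighbours of `v`) to `{0, …, q}`; the edge towards the parent is labelled `q`;
along the path `vp` the downward edges are labelled `0`; and `P` contains, for
all `u₁, u₂`, an element carrying `u₁` to `u₂` and preserving the labels on the
rooted subtree of descendants of `u₁`. -/
def IsPLabelling {q : ℕ} [NeZero q] (P : Subgroup (Equiv.Perm (Vertex q)))
    (c : Vertex q → Vertex q → Fin (q + 1)) (vp : ℤ → Vertex q) : Prop :=
  (∀ v : Vertex q, ∀ j : Fin (q + 1),
      ∃! w : Vertex q, (Vertex.parent w = v ∨ w = Vertex.parent v) ∧ c v w = j) ∧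
  (∀ v : Vertex q, (c v (Vertex.parent v) : ℕ) = q) ∧
  (∀ n : ℤ, Vertex.parent (vp (n + 1)) = vp n) ∧
  (∀ n : ℤ, (c (vp n) (vp (n + 1)) : ℕ) = 0) ∧
  (∀ u₁ u₂ : Vertex q, ∃ x, x ∈ P ∧ x u₁ = u₂ ∧
    ∀ w w' : Vertex q, Vertex.Descendant u₁ w → Vertex.Descendant u₁ w' →
      (Vertex.parent w = w' ∨ Vertex.parent w' = w) → c (x w) (x w') = c w w')

open Classical in
/-- The standard labelling of `T_{q+1}`: the edge from `v` to its child `vj` is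
labelled `j` and the edge towards the parent is labelled `q`. -/
noncomputable def stdLabel (q : ℕ) [NeZero q] : Vertex q → Vertex q → Fin (q + 1) :=
  fun v w =>
    if Vertex.parent w = v then Fin.castLE (Nat.le_succ q) (w.lab (v.level + 1))
    else Fin.last q

/-- Convert an edge label in `{0,…,q}` known to be `< q` into a letter in `{0,…,q-1}`. -/
def toFinQ {q : ℕ} [NeZero q] (j : Fin (q + 1)) : Fin q :=
  if h : (j : ℕ) < q then ⟨j, h⟩ else ⟨0, Nat.pos_of_ne_zero (NeZero.ne q)⟩

/-- The string of labels read along the downward path of length `d` ending at `w`. -/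
def labelString {q : ℕ} [NeZero q] (c : Vertex q → Vertex q → Fin (q + 1)) :
    Vertex q → ℕ → List (Fin q)
  | _, 0 => []
  | w, (d + 1) => labelString c (Vertex.parent w) d ++ [toFinQ (c (Vertex.parent w) w)]

/-- The isomorphism `φ^c_v : T_v → T_{q,q}` given by a labelling `c`: a descendant `w`
of `v` is sent to the string of labels along the path from `v` down to `w`. -/
def phiStr {q : ℕ} [NeZero q] (c : Vertex q → Vertex q → Fin (q + 1)) (v w : Vertex q) :
    List (Fin q) :=
  labelString c w ((w.level - v.level).toNat)

/-- The set `P|_v = {φ^c_{x(v)} ∘ x ∘ (φ^c_v)⁻¹ : x ∈ P}` of sections of elements of `P`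
at the vertex `v`, with respect to the labelling `c`. -/
def sectSet {q : ℕ} [NeZero q] (P : Subgroup (Equiv.Perm (Vertex q)))
    (c : Vertex q → Vertex q → Fin (q + 1)) (v : Vertex q) :
    Set (Equiv.Perm (List (Fin q))) :=
  {g | ∃ x, x ∈ P ∧ ∀ w : Vertex q, Vertex.Descendant v w →
        g (phiStr c v w) = phiStr c (x v) (x w)}

/-- The standard isomorphism `φ_v : T_v → T_{q,q}`: a descendant `w` of `v` of level `m`
is sent to the string `(w_{n+1}, …, w_m)` where `n` is the level of `v`. -/
def stdStr {q : ℕ} (v w : Vertex q) : List (Fin q) :=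
  (List.range (w.level - v.level).toNat).map fun k => w.lab (v.level + 1 + k)

/-- The set `{φ_{x(v)} ∘ x ∘ φ_v⁻¹ : x ∈ P}` with respect to the standard isomorphisms. -/
def stdSect {q : ℕ} [NeZero q] (P : Subgroup (Equiv.Perm (Vertex q))) (v : Vertex q) :
    Set (Equiv.Perm (List (Fin q))) :=
  {g | ∃ x, x ∈ P ∧ ∀ w : Vertex q, Vertex.Descendant v w →
        g (stdStr v w) = stdStr (x v) (x w)}

/-- `Isom(T_{q,q})`: the group of permutations of the set of finite strings over
`{0,…,q-1}` preserving length and the prefix relation. -/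
def RIsom (q : ℕ) : Subgroup (Equiv.Perm (List (Fin q))) where
  carrier := {g | (∀ l : List (Fin q), (g l).length = l.length) ∧
    ∀ l₁ l₂ : List (Fin q), l₁ <+: l₂ → g l₁ <+: g l₂}
  one_mem' := ⟨fun _ => rfl, fun _ _ h => h⟩
  mul_mem' := by
    intro a b ha hb
    constructor
    · intro l
      rw [Equiv.Perm.mul_apply, ha.1, hb.1]
    · intro l₁ l₂ h
      rw [Equiv.Perm.mul_apply, Equiv.Perm.mul_apply]
      exact ha.2 _ _ (hb.2 _ _ h)
  inv_mem' := by
    intro a ha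
    have hlen : ∀ l : List (Fin q), (a⁻¹ l).length = l.length := by
      intro l
      have h := ha.1 (a⁻¹ l)
      rw [← Equiv.Perm.mul_apply, mul_inv_cancel, Equiv.Perm.one_apply] at h
      exact h.symm
    refine ⟨hlen, ?_⟩
    intro l₁ l₂ h
    have htake : List.take (a⁻¹ l₁).length (a⁻¹ l₂) <+: a⁻¹ l₂ := List.take_prefix _ _
    have h2 : a (List.take (a⁻¹ l₁).length (a⁻¹ l₂)) <+: a (a⁻¹ l₂) := ha.2 _ _ htake
    rw [← Equiv.Perm.mul_apply, mul_inv_cancel, Equiv.Perm.one_apply] at h2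
    have hle : l₁.length ≤ l₂.length := h.length_le
    have hlen3 : (a (List.take (a⁻¹ l₁).length (a⁻¹ l₂))).length = l₁.length := by
      rw [ha.1, List.length_take, hlen, hlen]
      omega
    have hpre : a (List.take (a⁻¹ l₁).length (a⁻¹ l₂)) <+: l₁ :=
      List.prefix_of_prefix_length_le h2 h (le_of_eq hlen3)
    have heq : a (List.take (a⁻¹ l₁).length (a⁻¹ l₂)) = l₁ := hpre.eq_of_length hlen3
    have heq2 : List.take (a⁻¹ l₁).length (a⁻¹ l₂) = a⁻¹ l₁ := by
      apply a.injective
      rw [heq, ← Equiv.Perm.mul_apply, mul_inv_cancel, Equiv.Perm.one_apply]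
    rw [← heq2]
    exact List.take_prefix _ _

/-- A subgroup of `Isom(T_{q,q})` is self-replicating if it is self-similar, transitive
on level 1, and all the section homomorphisms `g ↦ g|_w` are surjective. -/
def SelfReplicating {q : ℕ} (G : Subgroup (Equiv.Perm (List (Fin q)))) : Prop :=
  (∀ w : List (Fin q), ∀ g, g ∈ G → g w = w →
      ∃ g', g' ∈ G ∧ ∀ v : List (Fin q), g (w ++ v) = w ++ g' v) ∧
  (∀ j j' : Fin q, ∃ g ∈ G, g [j] = [j']) ∧
  (∀ w : List (Fin q), ∀ g', g' ∈ G →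
      ∃ g, g ∈ G ∧ g w = w ∧ ∀ v : List (Fin q), g (w ++ v) = w ++ g' v)

/-- The stabiliser of the string `w` in `G ≤ Isom(T_{q,q})`, as a subgroup of `G`. -/
def rstab {q : ℕ} (G : Subgroup (Equiv.Perm (List (Fin q)))) (w : List (Fin q)) :
    Subgroup G where
  carrier := {g | (g : Equiv.Perm (List (Fin q))) w = w}
  one_mem' := rfl
  mul_mem' := by
    intro a b ha hb
    show ((a * b : G) : Equiv.Perm (List (Fin q))) w = w
    rw [Subgroup.coe_mul, Equiv.Perm.mul_apply]
    rw [show (b : Equiv.Perm (List (Fin q))) w = w from hb,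
      show (a : Equiv.Perm (List (Fin q))) w = w from ha]
  inv_mem' := by
    intro a ha
    show ((a⁻¹ : G) : Equiv.Perm (List (Fin q))) w = w
    rw [Subgroup.coe_inv, Equiv.Perm.inv_eq_iff_eq]
    exact (show (a : Equiv.Perm (List (Fin q))) w = w from ha).symm


end Scale

/-!
For every `n`, transitivity of `P` yields an element sending `ξ|_n` to `ξ'|_n`, hence `ξ|_m` to
`ξ'|_m` for all `m ≤ n`. The sets of such elements form a nested sequence of nonempty closed
subsets of `P`, and they are compact: once the image of one vertex is prescribed, an element of
`Isom(T_{q+1})_ω` can send any given vertex to only finitely many places. Any element of the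
intersection maps the ray of `ξ` onto that of `ξ'`, and it is elliptic because both rays run
through the same zero vertices far towards `ω`.
-/

open Topology

theorem Continuous.apply_of_discreteTopology {Z X Y : Type*} [TopologicalSpace Z]
    [TopologicalSpace X] [DiscreteTopology X] [TopologicalSpace Y] {f : Z → X → Y}
    {g : Z → X} (hf : Continuous f) (hg : Continuous g) : Continuous fun z => f z (g z) := by
  refine continuous_iff_continuousAt.mpr fun z => ?_
  have hloc : (fun z' => f z' (g z)) =ᶠ[𝓝 z] fun z' => f z' (g z') := by
    filter_upwards [hg.continuousAt (isOpen_discrete {g z} |>.mem_nhds rfl)] with z' hz'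
    rw [show g z' = g z from hz']
  exact ((continuous_apply (g z)).comp hf).continuousAt.congr hloc

theorem isClosed_range_perm_coe_coe_inv (X : Type*) [TopologicalSpace X] [DiscreteTopology X] :
    IsClosed (Set.range fun g : Equiv.Perm X => ((g : X → X), ((g⁻¹ : Equiv.Perm X) : X → X))) := by
  have hrange :
      (Set.range fun g : Equiv.Perm X => ((g : X → X), ((g⁻¹ : Equiv.Perm X) : X → X))) =
        ⋂ x : X, ({p | p.2 (p.1 x) = x} ∩ {p | p.1 (p.2 x) = x}) := by
    ext p
    simp only [Set.mem_range, Set.mem_iInter, Set.mem_inter_iff, Set.mem_ofPred_eq]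
    constructor
    · rintro ⟨g, rfl⟩
      exact fun x => ⟨g.symm_apply_apply x, g.apply_symm_apply x⟩
    · intro h
      exact ⟨⟨p.1, p.2, fun x => (h x).1, fun x => (h x).2⟩, rfl⟩
  rw [hrange]
  refine isClosed_iInter fun x => IsClosed.inter ?_ ?_ <;>
    refine isClosed_eq (Continuous.apply_of_discreteTopology (by fun_prop) ?_) continuous_const <;>
    exact (continuous_apply x).comp (by fun_prop)

namespace Scale

section PermTop

attribute [local instance] permTop

variable {X : Type*}

theorem isInducing_perm_coe_coe_inv [TopologicalSpace X] [DiscreteTopology X] :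
    IsInducing fun g : Equiv.Perm X => ((g : X → X), ((g⁻¹ : Equiv.Perm X) : X → X)) := by
  constructor
  obtain rfl := DiscreteTopology.eq_bot (α := X)
  rfl

theorem isClosed_setOf_apply_eq (x y : X) : IsClosed {g : Equiv.Perm X | g x = y} := by
  let _ : TopologicalSpace X := ⊥
  have : DiscreteTopology X := ⟨rfl⟩
  exact (isClosed_discrete {y}).preimage
    ((continuous_apply x).comp (continuous_fst.comp isInducing_perm_coe_coe_inv.continuous))

/-- Tychonoff: under `g ↦ (g, g⁻¹)` such a set becomes a closed subset of a product of finite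
sets. -/
theorem isCompact_of_finite_image_apply {S : Set (Equiv.Perm X)} (hS : IsClosed S)
    (hfin : ∀ x, ((fun g : Equiv.Perm X => g x) '' S).Finite)
    (hfin_inv : ∀ x, ((fun g : Equiv.Perm X => g⁻¹ x) '' S).Finite) : IsCompact S := by
  let _ : TopologicalSpace X := ⊥
  have : DiscreteTopology X := ⟨rfl⟩
  have hj := isInducing_perm_coe_coe_inv (X := X)
  rw [hj.isCompact_iff]
  obtain ⟨C, hC, rfl⟩ := hj.isClosed_iff.mp hS
  rw [Set.image_preimage_eq_inter_range]
  refine IsCompact.of_isClosed_subset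
    ((isCompact_univ_pi fun x => (hfin x).isCompact).prod
      (isCompact_univ_pi fun x => (hfin_inv x).isCompact))
    (hC.inter (isClosed_range_perm_coe_coe_inv X)) ?_
  rintro _ ⟨hgC, g, rfl⟩
  exact ⟨fun x _ => ⟨g, hgC, rfl⟩, fun x _ => ⟨g, hgC, rfl⟩⟩

end PermTop

variable {q : ℕ} [NeZero q]

namespace Vertex

theorem trunc_level (v : Vertex q) : v.trunc v.level = v := by
  refine Vertex.ext rfl (funext fun i => ?_)
  show (if v.level < i then 0 else v.lab i) = v.lab i
  split_ifs with h
  · exact Fin.ext (v.zero_gt i h).symm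
  · rfl

theorem parent_trunc (v : Vertex q) (m : ℤ) : (v.trunc m).parent = v.trunc (m - 1) := by
  refine Vertex.ext rfl (funext fun i => ?_)
  show (if m - 1 < i then 0 else if m < i then 0 else v.lab i) = if m - 1 < i then 0 else v.lab i
  split_ifs <;> first | rfl | omega

theorem parent_iterate_eq_trunc (k : ℕ) (v : Vertex q) :
    parent^[k] v = v.trunc (v.level - k) := by
  induction k with
  | zero => simp [trunc_level]
  | succ k ih =>
    rw [Function.iterate_succ_apply', ih, parent_trunc]
    congr 1
    push_cast
    ring

theorem trunc_eq_zeroVtx (v : Vertex q) {m : ℤ} (hv : ∀ i ≤ m, (v.lab i : ℕ) = 0) :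
    v.trunc m = zeroVtx q m := by
  refine Vertex.ext rfl (funext fun i => ?_)
  show (if m < i then 0 else v.lab i) = 0
  split_ifs with h
  · rfl
  · exact Fin.ext (hv i (not_lt.mp h))

/-- Both rays towards `ω` eventually run through the zero vertices. -/
theorem exists_parent_iterate_eq (u v : Vertex q) : ∃ k l : ℕ, parent^[k] u = parent^[l] v := by
  obtain ⟨Nu, hNu⟩ := u.bdd
  obtain ⟨Nv, hNv⟩ := v.bdd
  set M := min (min Nu Nv) (min u.level v.level) - 1
  have hzero : ∀ w : Vertex q, M ≤ w.level → (∀ i ≤ M, (w.lab i : ℕ) = 0) →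
      parent^[(w.level - M).toNat] w = zeroVtx q M := by
    intro w hMw hw
    rw [parent_iterate_eq_trunc, Int.toNat_of_nonneg (by omega), sub_sub_cancel]
    exact w.trunc_eq_zeroVtx hw
  refine ⟨(u.level - M).toNat, (v.level - M).toNat, ?_⟩
  rw [hzero u (by omega) fun i hi => hNu i (by omega),
    hzero v (by omega) fun i hi => hNv i (by omega)]

theorem eq_of_parent_eq {w w' : Vertex q} (h : w.parent = w'.parent)
    (hlab : w.lab w.level = w'.lab w.level) : w = w' := by
  have hlevel : w.level = w'.level := by
    have := congrArg Vertex.level h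
    simp only [parent] at this
    omega
  refine Vertex.ext hlevel (funext fun i => ?_)
  rcases lt_trichotomy i w.level with hi | rfl | hi
  · have := congrFun (congrArg Vertex.lab h) i
    simp only [parent] at this
    rwa [if_neg (by omega), if_neg (by omega)] at this
  · exact hlab
  · exact Fin.ext ((w.zero_gt i hi).trans (w'.zero_gt i (by omega)).symm)

theorem finite_setOf_parent_eq (a : Vertex q) : {w : Vertex q | w.parent = a}.Finite := by
  refine Set.Finite.of_finite_image (f := fun w => w.lab (a.level + 1)) (Set.toFinite _) ?_
  intro w hw w' hw' hlab
  have hlevel : w.level = a.level + 1 := by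
    rw [← (hw : w.parent = a)]
    simp only [parent]
    ring
  exact eq_of_parent_eq (hw.trans hw'.symm) (hlevel ▸ hlab)

theorem finite_setOf_parent_iterate_eq (k : ℕ) (a : Vertex q) :
    {w : Vertex q | parent^[k] w = a}.Finite := by
  induction k with
  | zero => simp
  | succ k ih =>
    simp only [Function.iterate_succ_apply]
    exact ih.preimage' fun b _ => finite_setOf_parent_eq b

end Vertex

theorem parent_ray (ξ : ℤ → Fin q) (N : ℤ) (hξ : ∀ i : ℤ, i < N → (ξ i : ℕ) = 0) (m : ℤ) :
    (ray q ξ N hξ m).parent = ray q ξ N hξ (m - 1) := by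
  refine Vertex.ext rfl (funext fun i => ?_)
  show (if m - 1 < i then 0 else if m < i then 0 else ξ i) = if m - 1 < i then 0 else ξ i
  split_ifs <;> first | rfl | omega

theorem parent_iterate_ray (ξ : ℤ → Fin q) (N : ℤ) (hξ : ∀ i : ℤ, i < N → (ξ i : ℕ) = 0)
    (k : ℕ) (m : ℤ) : Vertex.parent^[k] (ray q ξ N hξ m) = ray q ξ N hξ (m - k) := by
  induction k with
  | zero => simp
  | succ k ih =>
    rw [Function.iterate_succ_apply', ih, parent_ray]
    congr 1
    push_cast
    ring

theorem ray_eq_zeroVtx (ξ : ℤ → Fin q) (N : ℤ) (hξ : ∀ i : ℤ, i < N → (ξ i : ℕ) = 0)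
    {m : ℤ} (hm : m < N) : ray q ξ N hξ m = zeroVtx q m := by
  refine Vertex.ext rfl (funext fun i => ?_)
  show (if m < i then 0 else ξ i) = 0
  split_ifs with h
  · rfl
  · exact Fin.ext (hξ i (by omega))

namespace IsomOmega

variable {x : Equiv.Perm (Vertex q)}

theorem apply_parent_iterate (hx : x ∈ IsomOmega q) (k : ℕ) (v : Vertex q) :
    x (Vertex.parent^[k] v) = Vertex.parent^[k] (x v) :=
  Function.Semiconj.iterate_right hx k v

theorem apply_ray_of_le (hx : x ∈ IsomOmega q) {ξ ξ' : ℤ → Fin q} {N N' : ℤ}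
    {hξ : ∀ i : ℤ, i < N → (ξ i : ℕ) = 0} {hξ' : ∀ i : ℤ, i < N' → (ξ' i : ℕ) = 0} {m n : ℤ}
    (hn : x (ray q ξ N hξ n) = ray q ξ' N' hξ' n) (hmn : m ≤ n) :
    x (ray q ξ N hξ m) = ray q ξ' N' hξ' m := by
  obtain ⟨k, rfl⟩ : ∃ k : ℕ, m = n - k := ⟨(n - m).toNat, by omega⟩
  rw [← parent_iterate_ray, ← parent_iterate_ray, apply_parent_iterate hx, hn]

/-- Once `u ↦ u'` is prescribed, an element of `Isom(T_{q+1})_ω` can send `v` only to the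
finitely many vertices below the image of a common ancestor of `u` and `v`. -/
theorem finite_image_apply (u u' v : Vertex q) :
    ((fun x : Equiv.Perm (Vertex q) => x v) '' {x | x ∈ IsomOmega q ∧ x u = u'}).Finite := by
  obtain ⟨k, l, hkl⟩ := Vertex.exists_parent_iterate_eq v u
  refine (Vertex.finite_setOf_parent_iterate_eq k (Vertex.parent^[l] u')).subset ?_
  rintro _ ⟨x, ⟨hx, hxu⟩, rfl⟩
  show Vertex.parent^[k] (x v) = Vertex.parent^[l] u'
  rw [← apply_parent_iterate hx, hkl, apply_parent_iterate hx, hxu]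

end IsomOmega

theorem isCompact_setOf_mem_and_apply_eq {P : Subgroup (Equiv.Perm (Vertex q))}
    (hPle : P ≤ IsomOmega q) (hPcl : IsClosed (P : Set (Equiv.Perm (Vertex q))))
    (u u' : Vertex q) : IsCompact {x | x ∈ P ∧ x u = u'} := by
  refine isCompact_of_finite_image_apply (hPcl.inter (isClosed_setOf_apply_eq u u'))
    (fun v => (IsomOmega.finite_image_apply u u' v).subset ?_)
    (fun v => (IsomOmega.finite_image_apply u' u v).subset ?_)
  · exact Set.image_mono fun x hx => ⟨hPle hx.1, hx.2⟩
  · rintro _ ⟨x, ⟨hxP, hxu⟩, rfl⟩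
    exact ⟨x⁻¹, ⟨hPle (P.inv_mem hxP), Equiv.Perm.inv_eq_iff_eq.mpr hxu.symm⟩, rfl⟩

end Scale

open Scale in
theorem statement_2_general (q : ℕ) [NeZero q]
    (P : Subgroup (Equiv.Perm (Vertex q))) (hP : IsScaleGroup P)
    (ξ ξ' : ℤ → Fin q) (N N' : ℤ)
    (hξ : ∀ i : ℤ, i < N → (ξ i : ℕ) = 0) (hξ' : ∀ i : ℤ, i < N' → (ξ' i : ℕ) = 0) :
    ∃ g ∈ P, Elliptic g ∧ ∀ m : ℤ, g (ray q ξ N hξ m) = ray q ξ' N' hξ' m := by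
  obtain ⟨hPle, hPcl, hPtr⟩ := hP
  set A : ℕ → Set (Equiv.Perm (Vertex q)) :=
    fun n => {x | x ∈ P ∧ x (ray q ξ N hξ n) = ray q ξ' N' hξ' n}
  have hA_anti : ∀ n, A (n + 1) ⊆ A n := fun n x hx =>
    ⟨hx.1, IsomOmega.apply_ray_of_le (hPle hx.1) hx.2 (by push_cast; omega)⟩
  have hA_nonempty : ∀ n, (A n).Nonempty := fun n => hPtr _ _
  obtain ⟨g, hg⟩ := IsCompact.nonempty_iInter_of_sequence_nonempty_isCompact_isClosed A hA_anti
    hA_nonempty (isCompact_setOf_mem_and_apply_eq hPle hPcl _ _)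
    fun n => hPcl.inter (isClosed_setOf_apply_eq _ _)
  rw [Set.mem_iInter] at hg
  have hgP : g ∈ P := (hg 0).1
  have hg_ray : ∀ m : ℤ, g (ray q ξ N hξ m) = ray q ξ' N' hξ' m := fun m =>
    IsomOmega.apply_ray_of_le (hPle hgP) (hg m.toNat).2 (Int.self_le_toNat m)
  refine ⟨g, hgP, ⟨ray q ξ N hξ (min N N' - 1), ?_⟩, hg_ray⟩
  rw [hg_ray, ray_eq_zeroVtx ξ' N' hξ' (by omega), ray_eq_zeroVtx ξ N hξ (by omega)]

open Scale in
/-- The elliptic part of a scale group acts transitively on the ends of the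
tree other than `ω`. -/
theorem statement_2 (q : ℕ) [NeZero q] (hq : 2 ≤ q)
    (P : Subgroup (Equiv.Perm (Vertex q))) (hP : IsScaleGroup P)
    (ξ ξ' : ℤ → Fin q) (N N' : ℤ)
    (hξ : ∀ i : ℤ, i < N → (ξ i : ℕ) = 0) (hξ' : ∀ i : ℤ, i < N' → (ξ' i : ℕ) = 0) :
    ∃ g ∈ P, Elliptic g ∧ ∀ m : ℤ, g (ray q ξ N hξ m) = ray q ξ' N' hξ' m :=
  statement_2_general q P hP ξ ξ' N N' hξ hξ'
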